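/- arXiv:0704.3355 — 4 statements merged into one kernel-verified Lean document; each statement's English description precedes it below -/
import Mathlib

section
/- Let $K$ be a field of characteristic $2$, $G$ a group, $z$ a central element of $G$ with $z^2 = 1$ and $z \neq 1$, $b \in G$, and let $g_1, \dots, g_t \in G$ be pairwise distinct elements such that $g_i^{-1} g_j \neq z$ for all $i, j$. Then the subgroup $X$ of the unit group of $KG$ generated by the elements $h_i = 1 + b g_i (1+z)$, $1 \leq i \leq t$, is an elementary abelian $2$-group of order $2^t$; more precisely, the map $(\mathbb{Z}/2\mathbb{Z})^t \to X$ sending $(e_1,\dots,e_t)$ to $h_1^{e_1} \cdots h_t^{e_t}$ is a group isomorphism. -/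
/-! Put `A i = b gᵢ (1 + z)`. As `z` is central with `z² = 1` and the characteristic is `2`,
`(1 + z)² = 0`, so every product `A i * A j` vanishes and `x ↦ 1 + x` is an injective group
homomorphism from the additive span of the `A i` into the units; `hᵢ = 1 + A i`, so
`e ↦ ∏ hᵢ ^ eᵢ` is `e ↦ 1 + ∑ eᵢ A i`. This is injective because the `A i` are linearly
independent: the coefficient of `b gᵢ` in `∑ cⱼ A j` is `cᵢ`, since `b gⱼ z ≠ b gᵢ`. -/

open Function

namespace AddMonoidHom

variable {M R : Type*} [AddGroup M] [Ring R]

def oneAddUnits (f : M →+ R) (hf : ∀ x y, f x * f y = 0) : Multiplicative M →* Rˣ where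
  toFun x :=
    { val := 1 + f x.toAdd
      inv := 1 + f (-x.toAdd)
      val_inv := by simp [mul_add, add_mul, hf]
      inv_val := by simp [mul_add, add_mul, hf] }
  map_one' := by ext; simp
  map_mul' x y := by ext; simp [mul_add, add_mul, hf, add_assoc]

@[simp]
lemma val_oneAddUnits (f : M →+ R) (hf : ∀ x y, f x * f y = 0) (x : Multiplicative M) :
    (f.oneAddUnits hf x : R) = 1 + f x.toAdd := rfl

lemma oneAddUnits_injective {f : M →+ R} (hf : ∀ x y, f x * f y = 0) (hinj : Injective f) :
    Injective (f.oneAddUnits hf) := fun _ _ h =>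
  Multiplicative.toAdd.injective <| hinj <| add_left_cancel (congrArg Units.val h)

end AddMonoidHom

lemma MonoidHom.eq_prod_ofFn_mulSingle {M H : Type*} [CommMonoid M] [Monoid H] {t : ℕ}
    (ψ : (Fin t → M) →* H) (e : Fin t → M) :
    ψ e = (List.ofFn fun i => ψ (Pi.mulSingle i (e i))).prod := by
  conv_lhs => rw [← Finset.univ_prod_mulSingle e, ← List.prod_ofFn, map_list_prod, List.map_ofFn]
  rfl

lemma Multiplicative.ofAdd_one_pow_val {n : ℕ} [NeZero n] (x : Multiplicative (ZMod n)) :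
    ofAdd (1 : ZMod n) ^ x.toAdd.val = x := by
  rw [← ofAdd_nsmul, nsmul_one, ZMod.natCast_zmod_val, ofAdd_toAdd]

section ElementaryAbelian

variable {H : Type*} [Group H] {n t : ℕ} [NeZero n]

lemma MonoidHom.eq_prod_ofFn_pow_val (ψ : (Fin t → Multiplicative (ZMod n)) →* H)
    (e : Fin t → Multiplicative (ZMod n)) :
    ψ e = (List.ofFn fun i => ψ (Pi.mulSingle i (.ofAdd 1)) ^ (e i).toAdd.val).prod := by
  rw [ψ.eq_prod_ofFn_mulSingle]
  congr! with i
  rw [← map_pow, ← Pi.mulSingle_pow, Multiplicative.ofAdd_one_pow_val]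

lemma MonoidHom.range_eq_closure_mulSingle (ψ : (Fin t → Multiplicative (ZMod n)) →* H) :
    ψ.range = Subgroup.closure (Set.range fun i => ψ (Pi.mulSingle i (.ofAdd 1))) := by
  apply le_antisymm
  · rintro _ ⟨e, rfl⟩
    rw [ψ.eq_prod_ofFn_pow_val]
    refine list_prod_mem fun x hx => ?_
    obtain ⟨i, rfl⟩ := List.mem_ofFn.mp hx
    exact pow_mem (Subgroup.subset_closure (Set.mem_range_self i)) _
  · rw [Subgroup.closure_le]
    rintro _ ⟨i, rfl⟩
    exact ⟨_, rfl⟩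

noncomputable def MonoidHom.equivClosureMulSingle (ψ : (Fin t → Multiplicative (ZMod n)) →* H)
    (hψ : Injective ψ) :
    (Fin t → Multiplicative (ZMod n)) ≃*
      Subgroup.closure (Set.range fun i => ψ (Pi.mulSingle i (.ofAdd 1))) :=
  (MonoidHom.ofInjective hψ).trans (MulEquiv.subgroupCongr ψ.range_eq_closure_mulSingle)

end ElementaryAbelian

lemma Fintype.linearCombination_mul_linearCombination_eq_zero {K R ι : Type*} [CommSemiring K]
    [Semiring R] [Algebra K R] [Fintype ι] {A : ι → R} (hA : ∀ i j, A i * A j = 0) (c d : ι → K) :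
    Fintype.linearCombination K A c * Fintype.linearCombination K A d = 0 := by
  simp [Fintype.linearCombination_apply, Finset.sum_mul_sum, hA]

lemma one_add_mul_one_add_self_eq_zero {R : Type*} [Ring R] [CharP R 2] {x : R} (hx : x * x = 1) :
    (1 + x) * (1 + x) = 0 := by
  rw [add_mul, one_mul, mul_add, mul_one, hx, add_comm x 1, CharTwo.add_self_eq_zero]

lemma MonoidAlgebra.linearIndependent_of_mul_one_add_of {K G ι : Type*} [Ring K] [Monoid G]
    [Fintype ι] {y : ι → G} {z : G} (hy : Injective y) (hz : ∀ i j, y i * z ≠ y j) :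
    LinearIndependent K fun i => of K G (y i) * (1 + of K G z) := by
  classical
  rw [Fintype.linearIndependent_iff]
  intro c hc j
  have := congrArg (fun x : MonoidAlgebra K G => x.coeff (y j)) hc
  simpa [mul_add, ← map_mul, MonoidAlgebra.coeff_sum, Finsupp.single_apply, hz, hy.eq_iff]
    using this

lemma MonoidAlgebra.of_mul_one_add_of_mul_of_mul_one_add_of_eq_zero {K G : Type*} [Field K]
    [CharP K 2] [Group G] {z : G} (hzc : z ∈ Subgroup.center G) (hz2 : z ^ 2 = 1) (x y : G) :
    of K G x * (1 + of K G z) * (of K G y * (1 + of K G z)) = 0 := by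
  have : CharP (MonoidAlgebra K G) 2 := charP_of_injective_algebraMap' K 2
  have hsq : (1 + of K G z) * (1 + of K G z) = 0 :=
    one_add_mul_one_add_self_eq_zero (by rw [← map_mul, ← sq, hz2, map_one])
  have hcomm : Commute (1 + of K G z) (of K G y) :=
    (Commute.one_left _).add_left (Commute.map (Subgroup.mem_center_iff.mp hzc y).symm _)
  rw [mul_assoc, ← mul_assoc (1 + _), hcomm.eq, mul_assoc, hsq, mul_zero, mul_zero]

theorem exists_mulEquiv_closure_one_add_of_linearIndependent {K R : Type*} [CommRing K]
    [CharP K 2] [Ring R] [Algebra K R] {t : ℕ} {A : Fin t → R} (hA : ∀ i j, A i * A j = 0)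
    (hAind : LinearIndependent K A) :
    ∃ u : Fin t → Rˣ, (∀ i, (u i : R) = 1 + A i) ∧
      Nat.card (Subgroup.closure (Set.range u)) = 2 ^ t ∧
      ∃ φ : (Fin t → Multiplicative (ZMod 2)) ≃* Subgroup.closure (Set.range u),
        ∀ e, (φ e : Rˣ) = (List.ofFn fun i => u i ^ (e i).toAdd.val).prod := by
  let f : (Fin t → ZMod 2) →+ R :=
    (Fintype.linearCombination K A).toAddMonoidHom.comp
      ((ZMod.castHom (dvd_refl 2) K).compLeft (Fin t)).toAddMonoidHom
  have hf : ∀ x y, f x * f y = 0 := fun _ _ =>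
    Fintype.linearCombination_mul_linearCombination_eq_zero hA _ _
  have hf_inj : Injective f :=
    hAind.fintypeLinearCombination_injective.comp (ZMod.castHom_injective K).comp_left
  let ψ := (f.oneAddUnits hf).comp (MulEquiv.funMultiplicative (Fin t) (ZMod 2)).symm.toMonoidHom
  have hψ : Injective ψ :=
    (AddMonoidHom.oneAddUnits_injective hf hf_inj).comp
      (MulEquiv.funMultiplicative _ _).symm.injective
  refine ⟨_, fun i => ?_, ?_, ψ.equivClosureMulSingle hψ, ψ.eq_prod_ofFn_pow_val⟩
  · simp [ψ, f, Fintype.linearCombination_apply, Pi.mulSingle_apply, apply_ite]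
  · rw [← Nat.card_congr (ψ.equivClosureMulSingle hψ).toEquiv]
    simp

theorem generated_group_elementary_abelian_general
    (K G : Type*) [Field K] [CharP K 2] [Group G]
    (z : G) (hzc : z ∈ Subgroup.center G) (hz2 : z ^ 2 = 1)
    (b : G) (t : ℕ) (g : Fin t → G) (hinj : Function.Injective g)
    (hne : ∀ i j, (g i)⁻¹ * g j ≠ z) :
    letI o := MonoidAlgebra.of K G
    ∃ u : Fin t → (MonoidAlgebra K G)ˣ,
      (∀ i, (u i : MonoidAlgebra K G) = 1 + o (b * g i) * (1 + o z)) ∧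
      Nat.card (Subgroup.closure (Set.range u)) = 2 ^ t ∧
      ∃ φ : (Fin t → Multiplicative (ZMod 2)) ≃* Subgroup.closure (Set.range u),
        ∀ e : Fin t → Multiplicative (ZMod 2),
          ((φ e : Subgroup.closure (Set.range u)) : (MonoidAlgebra K G)ˣ)
            = (List.ofFn fun i : Fin t =>
                u i ^ (Multiplicative.toAdd (e i)).val).prod :=
  exists_mulEquiv_closure_one_add_of_linearIndependent
    (fun _ _ => MonoidAlgebra.of_mul_one_add_of_mul_of_mul_one_add_of_eq_zero hzc hz2 _ _)
    (MonoidAlgebra.linearIndependent_of_mul_one_add_of ((mul_right_injective b).comp hinj)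
      fun i j h => hne i j <| by
        rw [← mul_left_cancel ((mul_assoc _ _ _).symm.trans h), inv_mul_cancel_left])

/-- The elements `hᵢ = 1 + b gᵢ (1+z)` (with the `gᵢ` distinct and
`gᵢ⁻¹ gⱼ ≠ z`) are units generating an elementary abelian group of order `2^t`,
isomorphic to `(ℤ/2ℤ)^t` via `(e₁,…,e_t) ↦ h₁^{e₁} ⋯ h_t^{e_t}`. -/
theorem generated_group_elementary_abelian
    (K G : Type*) [Field K] [CharP K 2] [Group G]
    (z : G) (hzc : z ∈ Subgroup.center G) (hz2 : z ^ 2 = 1) (hz1 : z ≠ 1)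
    (b : G) (t : ℕ) (g : Fin t → G) (hinj : Function.Injective g)
    (hne : ∀ i j, (g i)⁻¹ * g j ≠ z) :
    letI o := MonoidAlgebra.of K G
    ∃ u : Fin t → (MonoidAlgebra K G)ˣ,
      (∀ i, (u i : MonoidAlgebra K G) = 1 + o (b * g i) * (1 + o z)) ∧
      Nat.card (Subgroup.closure (Set.range u)) = 2 ^ t ∧
      ∃ φ : (Fin t → Multiplicative (ZMod 2)) ≃* Subgroup.closure (Set.range u),
        ∀ e : Fin t → Multiplicative (ZMod 2),
          ((φ e : Subgroup.closure (Set.range u)) : (MonoidAlgebra K G)ˣ)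
            = (List.ofFn fun i : Fin t =>
                u i ^ (Multiplicative.toAdd (e i)).val).prod :=
  generated_group_elementary_abelian_general K G z hzc hz2 b t g hinj hne
end

section
/- Let $K$ be a field of characteristic $2$, let $G$ be a group, let $z$ be a central element of $G$ with $z^2 = 1$ and $z \neq 1$, let $a, b \in G$, and let $n$ be a positive integer such that: the conjugates $b^{a^i} = a^{-i} b a^{i}$ for $0 \leq i < n$ are pairwise distinct; $(b^{a^i})^{-1} b^{a^j} \neq z$ for all $0 \leq i, j < n$; and $a^{n}$ commutes with $b$. Set $h = 1 + b(1+z)$ in $KG$ and let $X$ be the subgroup of the unit group of $KG$ generated by the conjugates $a^{-i} h a^{i}$, $0 \leq i < n$. Then $X$ is an elementary abelian $2$-group of order $2^{n}$ which is normalized by $a$, conjugation by $a$ permutes the generators $a^{-i} h a^{i}$ cyclically, and $a^{n}$ centralizes $X$. -/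
/-!
Write `ω = 1 + z` and `bᵢ = a⁻ⁱ b aⁱ`. As `z` is a central involution and the characteristic
is `2`, `ω` is central with `ω² = 0`, so the elements `tᵢ = bᵢ ω` satisfy `tᵢ tⱼ = 0`. Hence
`v ↦ 1 + ∑ vᵢ tᵢ` is a homomorphism from `(ZMod 2)ⁿ` to the units of `KG`. It sends the standard
basis to the generators `a⁻ⁱ h aⁱ = 1 + tᵢ`, so its image is `X`, and it is injective because
the `tᵢ` are linearly independent: `bⱼ` occurs in `tᵢ` only for `i = j`, as `bᵢ z ≠ bⱼ`.
The statements about `a` hold in any group, for the subgroup generated by the conjugates of an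
element under `aⁱ`, `i < n`, as soon as `aⁿ` commutes with that element.
-/

open Function Multiplicative

section SquareZero

variable {R V : Type*} [Ring R] [AddGroup V]

def oneAddUnitsHom (f : V →+ R) (hf : ∀ v w, f v * f w = 0) : Multiplicative V →* Rˣ :=
  MonoidHom.toHomUnits
    { toFun v := 1 + f v.toAdd
      map_one' := by simp
      map_mul' v w := by
        simp only [toAdd_mul, map_add, mul_add, add_mul, one_mul, mul_one, hf, add_zero]
        abel }

@[simp]
lemma val_oneAddUnitsHom_apply (f : V →+ R) (hf : ∀ v w, f v * f w = 0) (v : Multiplicative V) :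
    (oneAddUnitsHom f hf v : R) = 1 + f v.toAdd := rfl

lemma oneAddUnitsHom_injective {f : V →+ R} (hf : ∀ v w, f v * f w = 0) (hinj : Injective f) :
    Injective (oneAddUnitsHom f hf) := fun _ _ h =>
  toAdd.injective <| hinj <| add_left_cancel (congrArg Units.val h)

end SquareZero

section ElementaryAbelian

variable {ι H : Type*} [Group H]

lemma closure_range_ofAdd_single_one [Finite ι] [DecidableEq ι] :
    Subgroup.closure (Set.range fun i => ofAdd (Pi.single i (1 : ZMod 2) : ι → ZMod 2)) = ⊤ := by
  refine eq_top_iff.mpr fun v _ => Pi.single_induction (fun u => ofAdd u ∈ _) v.toAdd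
    (one_mem _) (fun _ _ => mul_mem) fun i m => ?_
  obtain rfl | rfl : m = 0 ∨ m = 1 := by revert m; decide
  · rw [Pi.single_zero, ofAdd_zero]
    exact one_mem _
  · exact Subgroup.subset_closure ⟨i, rfl⟩


lemma MonoidHom.range_eq_closure_single [Finite ι] [DecidableEq ι]
    (φ : Multiplicative (ι → ZMod 2) →* H) :
    φ.range = Subgroup.closure (Set.range fun i => φ (ofAdd (Pi.single i 1))) := by
  rw [φ.range_eq_map, ← closure_range_ofAdd_single_one, MonoidHom.map_closure,
    ← Set.range_comp]
  rfl

lemma MonoidHom.card_range_of_injective [Finite ι] {φ : Multiplicative (ι → ZMod 2) →* H}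
    (hφ : Injective φ) : Nat.card φ.range = 2 ^ Nat.card ι := by
  rw [← Nat.card_congr (MonoidHom.ofInjective hφ).toEquiv]
  exact (Nat.card_fun (β := ZMod 2)).trans (by rw [Nat.card_zmod])

lemma MonoidHom.mul_self_eq_one_of_mem_range (φ : Multiplicative (ι → ZMod 2) →* H) {x : H}
    (hx : x ∈ φ.range) : x * x = 1 := by
  obtain ⟨v, rfl⟩ := hx
  rw [← map_mul, ← map_one φ]
  exact congrArg φ (ZModModule.add_self v.toAdd)

lemma MonoidHom.mul_comm_of_mem_range {C : Type*} [CommGroup C] (φ : C →* H) {x y : H}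
    (hx : x ∈ φ.range) (hy : y ∈ φ.range) : x * y = y * x := by
  obtain ⟨v, rfl⟩ := hx
  obtain ⟨w, rfl⟩ := hy
  exact ((Commute.all v w).map φ).eq

end ElementaryAbelian

section ZModTwoCombination

variable (K : Type*) {ι R : Type*} [CommRing K] [CharP K 2] [Fintype ι]
  [Ring R] [Algebra K R]

noncomputable def zmodTwoLinearCombination (t : ι → R) : (ι → ZMod 2) →+ R :=
  (Fintype.linearCombination K t).toAddMonoidHom.comp
    ((ZMod.castHom (dvd_refl 2) K).toAddMonoidHom.compLeft ι)

variable {K}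

lemma zmodTwoLinearCombination_single [DecidableEq ι] (t : ι → R) (i : ι) :
    zmodTwoLinearCombination K t (Pi.single i 1) = t i := by
  have hcast : (ZMod.castHom (dvd_refl 2) K).toAddMonoidHom.compLeft ι (Pi.single i 1) =
      Pi.single i 1 :=
    funext fun j => (Pi.apply_single (fun _ => ZMod.castHom (dvd_refl 2) K) (fun _ => map_zero _)
      i 1 j).trans (by rw [map_one])
  rw [zmodTwoLinearCombination, AddMonoidHom.comp_apply, hcast, LinearMap.toAddMonoidHom_coe,
    Fintype.linearCombination_apply_single, one_smul]

lemma zmodTwoLinearCombination_mul_eq_zero {t : ι → R} (ht : ∀ i j, t i * t j = 0)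
    (v w : ι → ZMod 2) : zmodTwoLinearCombination K t v * zmodTwoLinearCombination K t w = 0 := by
  simp only [zmodTwoLinearCombination, AddMonoidHom.coe_comp, comp_apply,
    LinearMap.toAddMonoidHom_coe, Fintype.linearCombination_apply, Finset.sum_mul_sum,
    smul_mul_smul, ht, smul_zero, Finset.sum_const_zero]

lemma zmodTwoLinearCombination_injective [Nontrivial K] {t : ι → R} (ht : LinearIndependent K t) :
    Injective (zmodTwoLinearCombination K t) :=
  ht.fintypeLinearCombination_injective.comp
    ((ZMod.castHom (dvd_refl 2) K).injective.comp_left)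

lemma LinearIndependent.exists_injective_hom_units_one_add [Nontrivial K] [DecidableEq ι]
    {t : ι → R} (hlin : LinearIndependent K t) (ht : ∀ i j, t i * t j = 0) :
    ∃ φ : Multiplicative (ι → ZMod 2) →* Rˣ,
      Injective φ ∧ ∀ i, (φ (ofAdd (Pi.single i 1)) : R) = 1 + t i :=
  ⟨oneAddUnitsHom _ (zmodTwoLinearCombination_mul_eq_zero ht),
    oneAddUnitsHom_injective _ (zmodTwoLinearCombination_injective hlin),
    fun i => by rw [val_oneAddUnitsHom_apply, toAdd_ofAdd, zmodTwoLinearCombination_single]⟩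

end ZModTwoCombination

lemma Commute.mul_mul_mul_eq_zero {R : Type*} [MonoidWithZero R] {y ω : R} (h : Commute y ω)
    (hω : ω * ω = 0) (x : R) : x * ω * (y * ω) = 0 := by
  rw [mul_assoc, ← mul_assoc ω, ← h.eq, mul_assoc, hω, mul_zero, mul_zero]

section ConjugatesByPowers

variable {H : Type*} [Group H] {A h : H} {n : ℕ}

lemma conj_pow_mod (hA : Commute (A ^ n) h) (i : ℕ) :
    (A ^ i)⁻¹ * h * A ^ i = (A ^ (i % n))⁻¹ * h * A ^ (i % n) := by
  have hi : A ^ i = (A ^ n) ^ (i / n) * A ^ (i % n) := by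
    rw [← pow_mul, ← pow_add, Nat.div_add_mod]
  calc (A ^ i)⁻¹ * h * A ^ i
      = (A ^ (i % n))⁻¹ * (((A ^ n) ^ (i / n))⁻¹ * h * (A ^ n) ^ (i / n)) * A ^ (i % n) := by
        rw [hi]; group
    _ = (A ^ (i % n))⁻¹ * h * A ^ (i % n) := by rw [(hA.pow_left _).inv_mul_cancel]

lemma inv_mul_conj_pow_mul (hA : Commute (A ^ n) h) (i : ℕ) :
    A⁻¹ * ((A ^ i)⁻¹ * h * A ^ i) * A = (A ^ ((i + 1) % n))⁻¹ * h * A ^ ((i + 1) % n) := by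
  rw [← conj_pow_mod hA]
  group

lemma inv_mul_mul_mem_closure_conj_pow (hA : Commute (A ^ n) h) {x : H}
    (hx : x ∈ Subgroup.closure {x | ∃ i < n, x = (A ^ i)⁻¹ * h * A ^ i}) :
    A⁻¹ * x * A ∈ Subgroup.closure {x | ∃ i < n, x = (A ^ i)⁻¹ * h * A ^ i} := by
  set S := {x | ∃ i < n, x = (A ^ i)⁻¹ * h * A ^ i}
  have hle : Subgroup.closure S ≤ (Subgroup.closure S).comap (MulAut.conj A⁻¹).toMonoidHom := by
    refine (Subgroup.closure_le _).mpr ?_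
    rintro _ ⟨i, hi, rfl⟩
    simp only [SetLike.mem_coe, Subgroup.mem_comap, MulEquiv.coe_toMonoidHom, MulAut.conj_apply,
      inv_inv, inv_mul_conj_pow_mul hA]
    exact Subgroup.subset_closure ⟨_, Nat.mod_lt _ (by omega), rfl⟩
  simpa only [Subgroup.mem_comap, MulEquiv.coe_toMonoidHom, MulAut.conj_apply, inv_inv]
    using hle hx

lemma pow_mul_eq_mul_pow_of_mem_closure_conj_pow (hA : Commute (A ^ n) h) {x : H}
    (hx : x ∈ Subgroup.closure {x | ∃ i < n, x = (A ^ i)⁻¹ * h * A ^ i}) :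
    A ^ n * x = x * A ^ n := by
  refine (Subgroup.mem_centralizer_singleton_iff.mp ?_).symm
  refine (Subgroup.closure_le _).mpr ?_ hx
  rintro _ ⟨i, -, rfl⟩
  exact Subgroup.mem_centralizer_singleton_iff.mpr
    (((Commute.pow_pow_self A n i).inv_right.mul_right hA).mul_right
      (Commute.pow_pow_self A n i)).eq.symm

end ConjugatesByPowers

namespace MonoidAlgebra

variable {K G : Type*} [CommRing K] [Group G] {z : G}

lemma commute_of_one_add_of (hz : z ∈ Subgroup.center G) (g : G) :
    Commute (of K G g) (1 + of K G z) :=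
  (Commute.one_right _).add_right (Commute.map (Subgroup.mem_center_iff.mp hz g) (of K G))

lemma of_inv_mul_one_add_mul_of (hz : z ∈ Subgroup.center G) (x y : G) :
    of K G x⁻¹ * (1 + of K G y * (1 + of K G z)) * of K G x =
      1 + of K G (x⁻¹ * y * x) * (1 + of K G z) := by
  rw [mul_add, add_mul, mul_one, ← map_mul, inv_mul_cancel, map_one, mul_assoc, mul_assoc,
    ← (commute_of_one_add_of hz x).eq, map_mul, map_mul, mul_assoc, mul_assoc]

lemma one_add_of_mul_self [CharP K 2] (hz : z ^ 2 = 1) :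
    (1 + of K G z) * (1 + of K G z) = 0 := by
  have : CharP (MonoidAlgebra K G) 2 := charP_of_injective_algebraMap' K 2
  have hzz : of K G z * of K G z = 1 := by rw [← map_mul, ← sq, hz, map_one]
  calc (1 + of K G z) * (1 + of K G z) = (1 + 1) + (of K G z + of K G z) := by
        simp only [mul_add, add_mul, one_mul, mul_one, hzz]; abel
    _ = 0 := by rw [CharTwo.add_self_eq_zero, CharTwo.add_self_eq_zero, add_zero]

lemma linearIndependent_of_mul_one_add_of_s6 {ι : Type*} {g : ι → G} (hg : Injective g)
    (hz : ∀ i j, g i * z ≠ g j) :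
    LinearIndependent K fun i => of K G (g i) * (1 + of K G z) := by
  classical
  have hcoeff : ∀ i j, (of K G (g i) * (1 + of K G z)).coeff (g j) = if i = j then 1 else 0 := by
    intro i j
    rw [mul_add, mul_one, ← map_mul, of_apply, of_apply, coeff_add, Finsupp.add_apply,
      coeff_single, coeff_single, Finsupp.single_apply, Finsupp.single_apply, if_neg (hz i j),
      add_zero]
    exact if_congr hg.eq_iff rfl rfl
  refine linearIndependent_iff'.mpr fun s c hs j hj => ?_
  have := congrArg (fun x => x.coeff (g j)) hs
  simpa only [coeff_sum, Finsupp.finsetSum_apply, coeff_smul_apply, hcoeff, smul_eq_mul,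
    mul_ite, mul_one, mul_zero, Finset.sum_ite_eq', if_pos hj, coeff_zero,
    Finsupp.coe_zero, Pi.zero_apply] using this

end MonoidAlgebra

theorem conjugates_generate_elementary_abelian_general
    (K G : Type*) [Field K] [CharP K 2] [Group G]
    (z : G) (hzc : z ∈ Subgroup.center G) (hz2 : z ^ 2 = 1)
    (a b : G) (n : ℕ) (hn : 0 < n)
    (hdist : ∀ i < n, ∀ j < n,
      (a ^ i)⁻¹ * b * a ^ i = (a ^ j)⁻¹ * b * a ^ j → i = j)
    (hnez : ∀ i < n, ∀ j < n,
      ((a ^ i)⁻¹ * b * a ^ i)⁻¹ * ((a ^ j)⁻¹ * b * a ^ j) ≠ z)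
    (hab : Commute (a ^ n) b) :
    letI o := MonoidAlgebra.of K G
    letI A : (MonoidAlgebra K G)ˣ := (MonoidAlgebra.of K G).toHomUnits a
    ∃ hu : (MonoidAlgebra K G)ˣ,
      (hu : MonoidAlgebra K G) = 1 + o b * (1 + o z) ∧
      letI c : ℕ → (MonoidAlgebra K G)ˣ := fun i => (A ^ i)⁻¹ * hu * A ^ i
      letI X := Subgroup.closure {x | ∃ i < n, x = c i}
      Nat.card X = 2 ^ n ∧
      (∀ x ∈ X, x * x = 1) ∧
      (∀ x ∈ X, ∀ y ∈ X, x * y = y * x) ∧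
      (∀ x ∈ X, A⁻¹ * x * A ∈ X) ∧
      (∀ i < n, A⁻¹ * c i * A = c ((i + 1) % n)) ∧
      (∀ x ∈ X, A ^ n * x = x * A ^ n) := by
  set o := MonoidAlgebra.of K G
  set A := o.toHomUnits a
  set t : Fin n → MonoidAlgebra K G := fun i => o ((a ^ (i : ℕ))⁻¹ * b * a ^ (i : ℕ)) * (1 + o z)
  have hlin : LinearIndependent K t :=
    MonoidAlgebra.linearIndependent_of_mul_one_add_of_s6 (fun i j h => Fin.ext (hdist i i.2 j j.2 h))
      fun i j h => hnez i i.2 j j.2 (eq_inv_mul_of_mul_eq h).symm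
  have ht : ∀ i j, t i * t j = 0 := fun _ _ =>
    (MonoidAlgebra.commute_of_one_add_of hzc _).mul_mul_mul_eq_zero
      (MonoidAlgebra.one_add_of_mul_self hz2) _
  obtain ⟨φ, hφ_inj, hφ⟩ := hlin.exists_injective_hom_units_one_add ht
  set hu := φ (ofAdd (Pi.single ⟨0, hn⟩ 1))
  have hu_val : (hu : MonoidAlgebra K G) = 1 + o b * (1 + o z) := by simp [hu, hφ, t]
  have hc : ∀ i : Fin n, (A ^ (i : ℕ))⁻¹ * hu * A ^ (i : ℕ) = φ (ofAdd (Pi.single i 1)) :=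
    fun i => Units.ext <| by
      rw [← map_pow, ← map_inv, Units.val_mul, Units.val_mul, MonoidHom.coe_toHomUnits,
        MonoidHom.coe_toHomUnits, hu_val, hφ, MonoidAlgebra.of_inv_mul_one_add_mul_of hzc]
  have hAn : Commute (A ^ n) hu := Commute.units_of_val <| by
    rw [← map_pow, MonoidHom.coe_toHomUnits, hu_val]
    exact (Commute.one_right _).add_right
      ((hab.map o).mul_right (MonoidAlgebra.commute_of_one_add_of hzc _))
  have hX : Subgroup.closure {x | ∃ i < n, x = (A ^ i)⁻¹ * hu * A ^ i} = φ.range := by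
    rw [φ.range_eq_closure_single]
    congr 1
    ext x
    exact ⟨fun ⟨i, hi, hx⟩ => ⟨⟨i, hi⟩, hx ▸ (hc ⟨i, hi⟩).symm⟩,
      fun ⟨i, hx⟩ => ⟨i, i.2, hx ▸ (hc i).symm⟩⟩
  refine ⟨hu, hu_val, ?_, ?_, ?_, fun x => inv_mul_mul_mem_closure_conj_pow hAn,
    fun i _ => inv_mul_conj_pow_mul hAn i, fun x => pow_mul_eq_mul_pow_of_mem_closure_conj_pow hAn⟩
  all_goals beta_reduce; rw [hX]
  · rw [MonoidHom.card_range_of_injective hφ_inj, Nat.card_fin]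
  · exact fun x => φ.mul_self_eq_one_of_mem_range
  · exact fun x hx y => φ.mul_comm_of_mem_range hx

/-- The conjugates `a⁻ⁱ h aⁱ` of `h = 1 + b(1+z)` generate an elementary abelian
group `X` of order `2^n`, normalized by `a`, on which conjugation by `a` permutes
the generators cyclically and which is centralized by `a^n`. -/
theorem conjugates_generate_elementary_abelian
    (K G : Type*) [Field K] [CharP K 2] [Group G]
    (z : G) (hzc : z ∈ Subgroup.center G) (hz2 : z ^ 2 = 1) (hz1 : z ≠ 1)
    (a b : G) (n : ℕ) (hn : 0 < n)
    (hdist : ∀ i < n, ∀ j < n,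
      (a ^ i)⁻¹ * b * a ^ i = (a ^ j)⁻¹ * b * a ^ j → i = j)
    (hnez : ∀ i < n, ∀ j < n,
      ((a ^ i)⁻¹ * b * a ^ i)⁻¹ * ((a ^ j)⁻¹ * b * a ^ j) ≠ z)
    (hab : Commute (a ^ n) b) :
    letI o := MonoidAlgebra.of K G
    letI A : (MonoidAlgebra K G)ˣ := (MonoidAlgebra.of K G).toHomUnits a
    ∃ hu : (MonoidAlgebra K G)ˣ,
      (hu : MonoidAlgebra K G) = 1 + o b * (1 + o z) ∧
      letI c : ℕ → (MonoidAlgebra K G)ˣ := fun i => (A ^ i)⁻¹ * hu * A ^ i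
      letI X := Subgroup.closure {x | ∃ i < n, x = c i}
      Nat.card X = 2 ^ n ∧
      (∀ x ∈ X, x * x = 1) ∧
      (∀ x ∈ X, ∀ y ∈ X, x * y = y * x) ∧
      (∀ x ∈ X, A⁻¹ * x * A ∈ X) ∧
      (∀ i < n, A⁻¹ * c i * A = c ((i + 1) % n)) ∧
      (∀ x ∈ X, A ^ n * x = x * A ^ n) :=
  conjugates_generate_elementary_abelian_general K G z hzc hz2 a b n hn hdist hnez hab
end

section
/- Let $U$ be a group, $a \in U$ an element of finite order, $n$ a positive integer, and $x_0, x_1, \dots, x_{n-1} \in U$. Let $X$ be the subgroup generated by $x_0, \dots, x_{n-1}$, and assume: the map $(\mathbb{Z}/2\mathbb{Z})^n \to X$, $(e_0,\dots,e_{n-1}) \mapsto x_0^{e_0} \cdots x_{n-1}^{e_{n-1}}$, is a group isomorphism (so $X$ is elementary abelian of order $2^n$ with basis $x_0,\dots,x_{n-1}$); $a^{-1} x_i a = x_{i+1 \bmod n}$ for all $0 \leq i < n$; $a^{n}$ commutes with every element of $X$; and $X \cap \langle a^{n} \rangle = \{1\}$. Then $\langle a^{n} \rangle$ is a central (hence normal)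 subgroup of the subgroup $H = \langle X, a \rangle$, and the quotient $H / \langle a^{n} \rangle$ is isomorphic to the wreath product $C_2 \wr C_n$, i.e., to the semidirect product $(\mathbb{Z}/n\mathbb{Z} \to \mathbb{Z}/2\mathbb{Z}) \rtimes \mathbb{Z}/n\mathbb{Z}$, where $\mathbb{Z}/n\mathbb{Z}$ acts on functions by translating the argument. -/
/-- The translation action of a group `A` on functions `A → C₂`. -/
def wreathMap (A : Type*) [Group A] : A →* MulAut (A → Multiplicative (ZMod 2)) where
  toFun a :=
    { toFun := fun f x => f (a⁻¹ * x)
      invFun := fun f x => f (a * x)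
      left_inv := fun f => by funext x; simp
      right_inv := fun f => by funext x; simp
      map_mul' := fun f g => rfl }
  map_one' := by ext f x; simp
  map_mul' a b := by ext f x; simp [mul_assoc]

/-- The wreath product `C₂ ≀ A` of a group of order 2 with the group `A`. -/
abbrev WreathC2 (A : Type*) [Group A] : Type _ :=
  (A → Multiplicative (ZMod 2)) ⋊[wreathMap A] A

/-!
Reindex the basis of `X` by `C = ℤ/n`, making `X` a faithful image `θ(C₂^C)` on which conjugation
by `a` is translation by the generator `c = 1` of `C`. As `cⁿ = 1`, `aⁿ` centralizes `X`, hence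
`H = ⟨a, X⟩`. In `H/⟨aⁿ⟩` the images of `X` and `a` satisfy the defining relations of `C₂ ≀ C`, so
the semidirect product maps onto it. The map is injective: if `aᵏ ∈ X⟨aⁿ⟩`, then `aᵏ` centralizes
`X` while conjugating by it translates by `cᵏ`, and translation is a faithful action, so `cᵏ = 1`;
what remains lies in `X ∩ ⟨aⁿ⟩ = 1`.
-/

open Multiplicative Function

theorem List.prod_ofFn_eq_single {M : Type*} [Monoid M] :
    ∀ {n : ℕ} (y : Fin n → M) (i : Fin n), (∀ j ≠ i, y j = 1) → (List.ofFn y).prod = y i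
  | _ + 1, y, i, hy => by
    rw [List.ofFn_succ, List.prod_cons]
    cases i using Fin.cases with
    | zero =>
      rw [List.prod_eq_one, mul_one]
      simpa [List.mem_ofFn] using fun k => hy _ (Fin.succ_ne_zero k)
    | succ i =>
      rw [hy 0 (Fin.succ_ne_zero i).symm, one_mul,
        List.prod_ofFn_eq_single _ i fun j hj => hy _ ((Fin.succ_injective _).ne hj)]

theorem ZMod.finEquiv_apply (n : ℕ) [NeZero n] (i : Fin n) : ZMod.finEquiv n i = (i : ℕ) := by
  obtain ⟨k, rfl⟩ := Nat.exists_eq_succ_of_ne_zero (NeZero.ne n)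
  exact (Fin.cast_val_eq_self i).symm

theorem Subgroup.normal_subgroupOf_of_le_centralizer {G : Type*} [Group G] {N H : Subgroup G}
    (hNH : N ≤ H) (hH : H ≤ Subgroup.centralizer N) : (N.subgroupOf H).Normal :=
  (Subgroup.normal_subgroupOf_iff hNH).mpr fun m h hm hh => by
    rwa [← hH hh m hm, mul_inv_cancel_right]

theorem SemidirectProduct.lift_injective {N G H : Type*} [Group N] [Group G] [Group H]
    {φ : G →* MulAut N} {fn : N →* H} {fg : G →* H}
    {h : ∀ g, fn.comp (φ g).toMonoidHom = (MulAut.conj (fg g)).toMonoidHom.comp fn}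
    (hfn : Injective fn) (hfg : Injective fg) (hdisj : Disjoint fn.range fg.range) :
    Injective (lift fn fg h) := by
  refine (injective_iff_map_eq_one _).mpr fun ⟨m, g⟩ hmg => ?_
  have hm : fn m = fg g⁻¹ := by
    rw [map_inv]; exact eq_inv_of_mul_eq_one_left hmg
  have hm1 : fn m = 1 := Subgroup.disjoint_def.mp hdisj ⟨m, rfl⟩ ⟨g⁻¹, hm.symm⟩
  have hg1 : fg g = 1 := by rwa [hm1, eq_comm, map_inv, inv_eq_one] at hm
  exact SemidirectProduct.ext (hfn (hm1.trans (map_one fn).symm))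
    (hfg (hg1.trans (map_one fg).symm))

@[simp]
theorem wreathMap_apply (A : Type*) [Group A] (a : A) (f : A → Multiplicative (ZMod 2)) (x : A) :
    wreathMap A a f x = f (a⁻¹ * x) := rfl

theorem wreathMap_mulSingle (A : Type*) [Group A] [DecidableEq A] (a j : A)
    (m : Multiplicative (ZMod 2)) :
    wreathMap A a (Pi.mulSingle j m) = Pi.mulSingle (a * j) m := by
  ext x
  simp [Pi.mulSingle_apply, inv_mul_eq_iff_eq_mul]

theorem wreathMap_injective (A : Type*) [Group A] : Injective (wreathMap A) := by
  classical
  refine (injective_iff_map_eq_one _).mpr fun a ha => ?_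
  have := congr_fun (congr_arg (· (Pi.mulSingle 1 (ofAdd 1))) ha) a
  simpa [Pi.mulSingle_apply] using this

section Translation

variable {U C : Type*} [Group U] [Group C] {a : U} {c : C}
  {θ : (C → Multiplicative (ZMod 2)) →* U}

theorem map_wreathMap_of_mulSingle [Finite C] [DecidableEq C]
    (h : ∀ j, θ (Pi.mulSingle (c * j) (ofAdd 1)) = a⁻¹ * θ (Pi.mulSingle j (ofAdd 1)) * a)
    (f : C → Multiplicative (ZMod 2)) : θ (wreathMap C c f) = a⁻¹ * θ f * a := by
  induction f using Pi.mulSingle_induction with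
  | one => simp
  | mul f g hf hg => simp only [map_mul, hf, hg]; group
  | mulSingle j m =>
    obtain rfl | rfl : m = 1 ∨ m = ofAdd 1 := by revert m; decide
    · simp
    · rw [wreathMap_mulSingle, h]

theorem map_wreathMap_pow (hθ : ∀ f, θ (wreathMap C c f) = a⁻¹ * θ f * a) (k : ℕ)
    (f : C → Multiplicative (ZMod 2)) :
    θ (wreathMap C (c ^ k) f) = (a ^ k)⁻¹ * θ f * a ^ k := by
  induction k generalizing f with
  | zero => simp
  | succ k ih =>
    rw [pow_succ, map_mul, MulAut.mul_apply, ih, hθ, pow_succ']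
    group

theorem commute_pow_orderOf (hθ : ∀ f, θ (wreathMap C c f) = a⁻¹ * θ f * a)
    (f : C → Multiplicative (ZMod 2)) : Commute (a ^ orderOf c) (θ f) := by
  have := map_wreathMap_pow hθ (orderOf c) f
  rw [pow_orderOf_eq_one, map_one, MulAut.one_apply, mul_assoc, eq_inv_mul_iff_mul_eq] at this
  exact this

theorem pow_eq_one_of_mul_pow_mem_zpowers (hθ_inj : Injective θ)
    (hθ : ∀ f, θ (wreathMap C c f) = a⁻¹ * θ f * a) {f : C → Multiplicative (ZMod 2)} {k : ℕ}
    (h : θ f * a ^ k ∈ Subgroup.zpowers (a ^ orderOf c)) : c ^ k = 1 := by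
  obtain ⟨t, ht⟩ := Subgroup.mem_zpowers_iff.mp h
  have hcomm : ∀ g, Commute (a ^ k) (θ g) := by
    intro g
    rw [show a ^ k = (θ f)⁻¹ * (a ^ orderOf c) ^ t by rw [ht]; group]
    exact ((Commute.all f g).map θ).inv_left.mul_left ((commute_pow_orderOf hθ g).zpow_left t)
  refine wreathMap_injective C ((map_one (wreathMap C)).symm ▸ ?_)
  ext g : 1
  apply hθ_inj
  rw [map_wreathMap_pow hθ, MulAut.one_apply, (hcomm g).inv_mul_cancel]

theorem closure_le_centralizer_zpowers (hθ : ∀ f, θ (wreathMap C c f) = a⁻¹ * θ f * a) :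
    Subgroup.closure (insert a (Set.range θ)) ≤
      Subgroup.centralizer (Subgroup.zpowers (a ^ orderOf c)) := by
  rw [Subgroup.zpowers_eq_closure, Subgroup.centralizer_closure, Subgroup.closure_le]
  rintro _ (rfl | ⟨f, rfl⟩) <;> rw [SetLike.mem_coe, Subgroup.mem_centralizer_singleton_iff]
  · exact (Commute.self_pow _ _).eq
  · exact (commute_pow_orderOf hθ f).eq.symm

end Translation

section Recognition

variable {C Q : Type*} [Group C] [Group Q] {c : C}

open Subgroup in
theorem nonempty_wreathC2_mulEquiv_of_closure_eq_top (hc : ∀ x : C, x ∈ Submonoid.powers c)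
    {φ : (C → Multiplicative (ZMod 2)) →* Q} {g : Q} (hφ_inj : Injective φ)
    (hφ : ∀ f, φ (wreathMap C c f) = g⁻¹ * φ f * g) (hg : g ^ orderOf c = 1)
    (hdisj : ∀ k : ℕ, g ^ k ∈ φ.range → c ^ k = 1)
    (hgen : closure (insert g (Set.range φ)) = ⊤) : Nonempty (WreathC2 C ≃* Q) := by
  have hc' (x : C) : x ∈ zpowers c := by
    obtain ⟨k, rfl⟩ := hc x; exact ⟨k, zpow_natCast c k⟩
  let φ₂ : C →* Q := monoidHomOfForallMemZpowers (g' := g⁻¹) hc' <|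
    orderOf_dvd_of_pow_eq_one <| by rw [inv_pow, hg, inv_one]
  have hφ₂ (k : ℕ) : φ₂ (c ^ k) = (g ^ k)⁻¹ := by
    rw [map_pow, monoidHomOfForallMemZpowers_apply_gen, inv_pow]
  have compat (b : C) : φ.comp (wreathMap C b).toMonoidHom =
      (MulAut.conj (φ₂ b)).toMonoidHom.comp φ := by
    obtain ⟨k, rfl⟩ : ∃ k : ℕ, c ^ k = b := hc b
    ext f : 1
    change φ (wreathMap C (c ^ k) f) = φ₂ (c ^ k) * φ f * (φ₂ (c ^ k))⁻¹
    rw [map_wreathMap_pow hφ, hφ₂, inv_inv]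
  have hφ₂_inj : Injective φ₂ := (injective_iff_map_eq_one φ₂).mpr fun b hb => by
    obtain ⟨k, rfl⟩ : ∃ k : ℕ, c ^ k = b := hc b
    rw [hφ₂, inv_eq_one] at hb
    exact hdisj k (hb ▸ one_mem _)
  have hdisj' : Disjoint φ.range φ₂.range := by
    refine disjoint_def.mpr ?_
    rintro _ ⟨f, rfl⟩ ⟨b, hb⟩
    obtain ⟨k, rfl⟩ : ∃ k : ℕ, c ^ k = b := hc b
    have hk : c ^ k = 1 := hdisj k ⟨f⁻¹, by rw [map_inv, ← hb, hφ₂, inv_inv]⟩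
    rw [← hb, hk, map_one]
  let Φ := SemidirectProduct.lift φ φ₂ compat
  have hΦ_surj : Surjective Φ := by
    refine MonoidHom.range_eq_top.mp (eq_top_iff.mpr (hgen ▸ (closure_le _).mpr ?_))
    rintro _ (rfl | ⟨f, rfl⟩)
    · refine ⟨(SemidirectProduct.inr c)⁻¹, ?_⟩
      rw [map_inv, SemidirectProduct.lift_inr, ← pow_one c, hφ₂, pow_one, inv_inv]
    · exact ⟨SemidirectProduct.inl f, SemidirectProduct.lift_inl φ φ₂ compat f⟩
  exact ⟨MulEquiv.ofBijective Φ ⟨SemidirectProduct.lift_injective hφ_inj hφ₂_inj hdisj', hΦ_surj⟩⟩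

end Recognition

section Quotient

variable {U C : Type*} [Group U] [Group C] {a : U} {c : C}
  {θ : (C → Multiplicative (ZMod 2)) →* U}

open Subgroup in
theorem nonempty_quotient_mulEquiv_wreathC2 (hc : ∀ x : C, x ∈ Submonoid.powers c)
    (hθ_inj : Injective θ) (hθ : ∀ f, θ (wreathMap C c f) = a⁻¹ * θ f * a)
    (hdisj : θ.range ⊓ zpowers (a ^ orderOf c) = ⊥)
    [((zpowers (a ^ orderOf c)).subgroupOf (closure (insert a (Set.range θ)))).Normal] :
    Nonempty (closure (insert a (Set.range θ)) ⧸
      (zpowers (a ^ orderOf c)).subgroupOf (closure (insert a (Set.range θ))) ≃* WreathC2 C) := by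
  set N := zpowers (a ^ orderOf c)
  set H := closure (insert a (Set.range θ))
  let q := QuotientGroup.mk' (N.subgroupOf H)
  have hq (u : H) : q u = 1 ↔ (u : U) ∈ N := by
    rw [QuotientGroup.mk'_apply, QuotientGroup.eq_one_iff, mem_subgroupOf]
  let aH : H := ⟨a, subset_closure (Set.mem_insert a _)⟩
  let θH : (C → Multiplicative (ZMod 2)) →* H :=
    θ.codRestrict H fun f => subset_closure (Set.mem_insert_of_mem a ⟨f, rfl⟩)
  have hinj : Injective (q.comp θH) := (injective_iff_map_eq_one _).mpr fun f hf => hθ_inj <| by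
    have hmem : θ f ∈ θ.range ⊓ N := ⟨⟨f, rfl⟩, (hq (θH f)).mp hf⟩
    rw [hdisj, mem_bot] at hmem
    rw [hmem, map_one]
  have hconj (f) : q (θH (wreathMap C c f)) = (q aH)⁻¹ * q (θH f) * q aH := by
    rw [← map_inv, ← map_mul, ← map_mul]
    exact congrArg q (Subtype.ext (hθ f))
  have hdisj' (k : ℕ) : q aH ^ k ∈ (q.comp θH).range → c ^ k = 1 := by
    rintro ⟨f, hf⟩
    refine pow_eq_one_of_mul_pow_mem_zpowers hθ_inj hθ ((hq (θH f⁻¹ * aH ^ k)).mp ?_)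
    rw [map_mul, map_pow, ← hf, MonoidHom.comp_apply, map_inv, map_inv, inv_mul_cancel]
  have hgen : closure (insert (q aH) (Set.range (q.comp θH))) = ⊤ := by
    rw [eq_top_iff, ← map_top_of_surjective q (QuotientGroup.mk'_surjective _),
      ← closure_closure_coe_preimage (k := insert a (Set.range θ)), MonoidHom.map_closure]
    refine closure_mono ?_
    rintro _ ⟨u, hu | ⟨f, hf⟩, rfl⟩
    · exact Or.inl (congrArg q (Subtype.ext hu))
    · exact Or.inr ⟨f, congrArg q (Subtype.ext hf)⟩
  obtain ⟨e⟩ := nonempty_wreathC2_mulEquiv_of_closure_eq_top hc hinj hconj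
    ((hq (aH ^ orderOf c)).mpr (mem_zpowers _) ▸ map_pow q aH _) hdisj' hgen
  exact ⟨e.symm⟩

end Quotient

section ZModIndexing

variable {U : Type*} [Group U] {n : ℕ} [NeZero n]

theorem mem_powers_ofAdd_one (x : Multiplicative (ZMod n)) :
    x ∈ Submonoid.powers (ofAdd (1 : ZMod n)) :=
  ⟨(toAdd x).val, show ofAdd (1 : ZMod n) ^ (toAdd x).val = x by
    rw [← ofAdd_nsmul, nsmul_one, ZMod.natCast_zmod_val, ofAdd_toAdd]⟩

theorem map_wreathMap_ofAdd_one {a : U} {x : ℕ → U}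
    {θ : (Multiplicative (ZMod n) → Multiplicative (ZMod 2)) →* U}
    (hθx : ∀ i < n, θ (Pi.mulSingle (ofAdd (i : ZMod n)) (ofAdd 1)) = x i)
    (hconj : ∀ i < n, a⁻¹ * x i * a = x ((i + 1) % n))
    (f : Multiplicative (ZMod n) → Multiplicative (ZMod 2)) :
    θ (wreathMap _ (ofAdd 1) f) = a⁻¹ * θ f * a := by
  refine map_wreathMap_of_mulSingle (fun j => ?_) f
  obtain ⟨i, hi, rfl⟩ : ∃ i < n, ofAdd (i : ZMod n) = j :=
    ⟨(toAdd j).val, ZMod.val_lt _, by rw [ZMod.natCast_zmod_val, ofAdd_toAdd]⟩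
  rw [hθx i hi, hconj i hi, ← hθx _ (Nat.mod_lt _ (NeZero.pos n)), ← ofAdd_add, ZMod.natCast_mod,
    Nat.cast_succ, add_comm]

theorem exists_zmod_basis_embedding {X : Subgroup U} {x : ℕ → U}
    (ψ : (Fin n → Multiplicative (ZMod 2)) ≃* X)
    (hψ : ∀ e : Fin n → Multiplicative (ZMod 2),
      ((ψ e : X) : U) = (List.ofFn fun i : Fin n => x i ^ (toAdd (e i)).val).prod) :
    ∃ θ : (Multiplicative (ZMod n) → Multiplicative (ZMod 2)) →* U, Injective θ ∧ θ.range = X ∧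
      ∀ i < n, θ (Pi.mulSingle (ofAdd (i : ZMod n)) (ofAdd 1)) = x i := by
  let e : Fin n ≃ Multiplicative (ZMod n) := (ZMod.finEquiv n).toEquiv.trans ofAdd
  let r := MulEquiv.arrowCongr e.symm (MulEquiv.refl (Multiplicative (ZMod 2)))
  refine ⟨X.subtype.comp (ψ.toMonoidHom.comp r.toMonoidHom),
    Subtype.val_injective.comp (ψ.injective.comp r.injective), ?_, fun i hi => ?_⟩
  · refine Subgroup.ext fun u => ⟨?_, fun hu => ⟨r.symm (ψ.symm ⟨u, hu⟩), by simp⟩⟩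
    rintro ⟨f, rfl⟩
    exact (ψ (r f)).2
  · have hr : r (Pi.mulSingle (ofAdd (i : ZMod n)) (ofAdd 1)) =
        Pi.mulSingle (⟨i, hi⟩ : Fin n) (ofAdd 1) := by
      have he : e ⟨i, hi⟩ = ofAdd (i : ZMod n) := congrArg ofAdd (ZMod.finEquiv_apply n _)
      ext j
      simp [r, ← he, Pi.mulSingle_apply, e.injective.eq_iff]
    simp only [MonoidHom.comp_apply, MulEquiv.coe_toMonoidHom, hr, Subgroup.coe_subtype, hψ]
    rw [List.prod_ofFn_eq_single _ ⟨i, hi⟩ fun j hj => by simp [Pi.mulSingle_eq_of_ne hj]]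
    simp [ZMod.val_one]

end ZModIndexing

theorem quotient_iso_wreath_product_general
    (U : Type*) [Group U] (a : U)
    (n : ℕ) (hn : 0 < n) (x : ℕ → U) :
    letI X := Subgroup.closure {y | ∃ i < n, y = x i}
    ∀ (ψ : (Fin n → Multiplicative (ZMod 2)) ≃* X),
      (∀ e : Fin n → Multiplicative (ZMod 2),
        ((ψ e : X) : U) = (List.ofFn fun i : Fin n =>
          x i ^ (Multiplicative.toAdd (e i)).val).prod) →
      (∀ i < n, a⁻¹ * x i * a = x ((i + 1) % n)) →
      (∀ u ∈ X, Commute (a ^ n) u) →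
      (X ⊓ Subgroup.zpowers (a ^ n) = ⊥) →
      letI H := Subgroup.closure ({a} ∪ {y | ∃ i < n, y = x i})
      letI N := Subgroup.zpowers (a ^ n)
      (∀ g ∈ H, ∀ m ∈ N, Commute g m) ∧ N ≤ H ∧
        ∃ hN : (N.subgroupOf H).Normal,
          letI := hN
          Nonempty (H ⧸ N.subgroupOf H ≃* WreathC2 (Multiplicative (ZMod n))) := by
  intro ψ hψ hconj _ hinter
  have : NeZero n := ⟨hn.ne'⟩
  obtain ⟨θ, hθ_inj, hθ_range, hθx⟩ := exists_zmod_basis_embedding ψ hψ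
  have hθ := map_wreathMap_ofAdd_one hθx hconj
  have hH : Subgroup.closure ({a} ∪ {y | ∃ i < n, y = x i}) =
      Subgroup.closure (insert a (Set.range θ)) := by
    rw [Set.insert_eq, Subgroup.closure_union, Subgroup.closure_union, ← MonoidHom.coe_range,
      Subgroup.closure_eq, hθ_range]
  have hord : a ^ n = a ^ orderOf (ofAdd (1 : ZMod n)) := by
    rw [orderOf_ofAdd_eq_addOrderOf, ZMod.addOrderOf_one]
  rw [← hθ_range, hord] at hinter
  rw [hH, hord]
  have hle := closure_le_centralizer_zpowers hθ
  have hNH : Subgroup.zpowers (a ^ orderOf (ofAdd (1 : ZMod n))) ≤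
      Subgroup.closure (insert a (Set.range θ)) :=
    Subgroup.zpowers_le.mpr (pow_mem (Subgroup.subset_closure (Set.mem_insert a _)) _)
  have hN := Subgroup.normal_subgroupOf_of_le_centralizer hNH hle
  exact ⟨fun g hg m hm => (hle hg m hm).symm, hNH, hN,
    nonempty_quotient_mulEquiv_wreathC2 (mem_powers_ofAdd_one (n := n)) hθ_inj hθ hinter⟩

/-- If `X = ⟨x₀, …, x_{n-1}⟩` is elementary abelian of order `2^n` with basis
`x₀, …, x_{n-1}`, conjugation by `a` permutes the `xᵢ` cyclically, `aⁿ`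
centralizes `X` and `X ∩ ⟨aⁿ⟩ = 1`, then `⟨aⁿ⟩` is central in `H = ⟨X, a⟩` and
`H / ⟨aⁿ⟩ ≅ C₂ ≀ Cₙ`. -/
theorem quotient_iso_wreath_product
    (U : Type*) [Group U] (a : U) (ha : IsOfFinOrder a)
    (n : ℕ) (hn : 0 < n) (x : ℕ → U) :
    letI X := Subgroup.closure {y | ∃ i < n, y = x i}
    ∀ (ψ : (Fin n → Multiplicative (ZMod 2)) ≃* X),
      (∀ e : Fin n → Multiplicative (ZMod 2),
        ((ψ e : X) : U) = (List.ofFn fun i : Fin n =>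
          x i ^ (Multiplicative.toAdd (e i)).val).prod) →
      (∀ i < n, a⁻¹ * x i * a = x ((i + 1) % n)) →
      (∀ u ∈ X, Commute (a ^ n) u) →
      (X ⊓ Subgroup.zpowers (a ^ n) = ⊥) →
      letI H := Subgroup.closure ({a} ∪ {y | ∃ i < n, y = x i})
      letI N := Subgroup.zpowers (a ^ n)
      (∀ g ∈ H, ∀ m ∈ N, Commute g m) ∧ N ≤ H ∧
        ∃ hN : (N.subgroupOf H).Normal,
          letI := hN
          Nonempty (H ⧸ N.subgroupOf H ≃* WreathC2 (Multiplicative (ZMod n))) :=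
  quotient_iso_wreath_product_general U a n hn x
end

section
/- Let $K$ be a field of characteristic $2$ and let $G$ be a finite non-abelian $2$-group whose derived subgroup $G'$ is cyclic, and suppose there exists an element $z \in Z(G) \setminus G'$ with $z^2 = 1$ and $z \neq 1$. Then the wreath product $C_2 \wr C_{|G'|}$ of a cyclic group of order $2$ with a cyclic group of order $|G'|$ is involved in the unit group $(KG)^{\times}$ of the group algebra $KG$; that is, there exist a subgroup $H$ of $(KG)^{\times}$ and a normal subgroup $N$ of $H$ with $H/N \cong C_2 \wr C_{|G'|}$. -/
/-!
Since `G'` is a cyclic `2`-group generated by commutators, it is generated by a single commutator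
`c = ⁅g, h⁆`, and after replacing `(g, h)` by `(h, g)` or `(g * h, h)` one may assume that
`g * c * g⁻¹ = c ^ s` with `s ≡ 1 [ZMOD 4]`. Then
`g ^ m * h * g ^ (-m) = c ^ (1 + s + ⋯ + s ^ (m - 1)) * h`, and lifting the exponent shows that
`2 ^ k ∣ 1 + s + ⋯ + s ^ (m - 1)` iff `2 ^ k ∣ m`. Hence the
conjugates `x a = g ^ a * h * g ^ (-a)` are faithfully indexed by `a : ZMod |G'|` and conjugation
by `g` shifts them.

In characteristic `2`, `ε = 1 + z` satisfies `ε ^ 2 = 0`, so the units `1 + ε * ∑ a ∈ S, x a`,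
for `S ⊆ ZMod |G'|`, form a copy of `C₂ ^ |G'|` on which `g` acts by translation. This gives a
homomorphism from `C₂ ^ |G'| ⋊ ℤ` to the unit group whose kernel maps trivially to
`C₂ ≀ C_{|G'|}`: as `h` is not central and `z ∉ G'`, the group elements `1`, `x a` and `z * x a`
are pairwise distinct, so `1 + ε * ∑ a ∈ S, x a` is a group element only for `S = ∅`.
-/

theorem two_pow_dvd_geom_sum_iff {s : ℤ} (hs : s ≡ 1 [ZMOD 4]) (k m : ℕ) :
    2 ^ k ∣ ∑ i ∈ Finset.range m, s ^ i ↔ 2 ^ k ∣ (m : ℤ) := by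
  rcases eq_or_ne s 1 with rfl | hs1
  · simp
  have hs4 : 4 ∣ s - 1 := Int.ModEq.dvd hs.symm
  have hlte := Int.two_pow_sub_pow' m hs4 (by omega)
  rw [one_pow, ← geom_sum_mul, emultiplicity_mul Int.prime_two, add_comm] at hlte
  have hfin : emultiplicity (2 : ℤ) (s - 1) ≠ ⊤ :=
    finiteMultiplicity_iff_emultiplicity_ne_top.1
      (Int.finiteMultiplicity_iff.2 ⟨by norm_num, sub_ne_zero.2 hs1⟩)
  rw [pow_dvd_iff_le_emultiplicity, pow_dvd_iff_le_emultiplicity,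
    WithTop.add_left_cancel hfin hlte]

section GroupTheory

open Subgroup
open scoped commutatorElement

variable {G : Type*} [Group G]

theorem conj_eq_conj_iff_commute {a b h : G} :
    a * h * a⁻¹ = b * h * b⁻¹ ↔ Commute (a⁻¹ * b) h := by
  constructor
  · intro H
    calc a⁻¹ * b * h = a⁻¹ * (b * h * b⁻¹) * b := by group
      _ = h * (a⁻¹ * b) := by rw [← H]; group
  · intro H
    calc a * h * a⁻¹ = a * (h * (a⁻¹ * b)) * b⁻¹ := by group
      _ = b * h * b⁻¹ := by rw [← H.eq]; group

theorem IsConj.mul_inv_mem_commutator {b c : G} (h : IsConj b c) : c * b⁻¹ ∈ commutator G := by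
  obtain ⟨u, rfl⟩ := isConj_iff.1 h
  exact commutator_mem_commutator (mem_top u) (mem_top b)

theorem conj_pow_eq_zpow_geom_sum_mul {g h c : G} {s : ℤ} (hgh : g * h * g⁻¹ = c * h)
    (hgc : g * c * g⁻¹ = c ^ s) (m : ℕ) :
    g ^ m * h * (g ^ m)⁻¹ = c ^ (∑ i ∈ Finset.range m, s ^ i) * h := by
  induction m with
  | zero => simp
  | succ m ih =>
    calc g ^ (m + 1) * h * (g ^ (m + 1))⁻¹ = g * (g ^ m * h * (g ^ m)⁻¹) * g⁻¹ := by group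
      _ = (g * c * g⁻¹) ^ (∑ i ∈ Finset.range m, s ^ i) * (g * h * g⁻¹) := by
        rw [ih, conj_zpow]; group
      _ = c ^ (∑ i ∈ Finset.range (m + 1), s ^ i) * h := by
        rw [hgc, hgh, geom_sum_succ, ← zpow_mul, zpow_add_one, mul_assoc]

theorem commute_zpow_iff_two_pow_dvd {g h c : G} {s : ℤ} {k : ℕ} (hgh : g * h * g⁻¹ = c * h)
    (hgc : g * c * g⁻¹ = c ^ s) (hs : s ≡ 1 [ZMOD 4]) (hc : orderOf c = 2 ^ k) (j : ℤ) :
    Commute (g ^ j) h ↔ (2 ^ k : ℤ) ∣ j := by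
  have key : ∀ m : ℕ, Commute (g ^ m) h ↔ (2 ^ k : ℤ) ∣ m := fun m => by
    rw [← two_pow_dvd_geom_sum_iff hs, ← Nat.cast_ofNat, ← Nat.cast_pow, ← hc,
      orderOf_dvd_iff_zpow_eq_one, ← mul_eq_right (b := h),
      ← conj_pow_eq_zpow_geom_sum_mul hgh hgc, mul_inv_eq_iff_eq_mul]
    rfl
  obtain ⟨m, rfl | rfl⟩ := Int.eq_nat_or_neg j
  · exact_mod_cast key m
  · rw [zpow_neg, Commute.inv_left_iff, Int.dvd_neg]
    exact_mod_cast key m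

theorem exists_injective_zmod_conj_family {g h : G} {n : ℕ} [NeZero n]
    (hgh : ∀ j : ℤ, Commute (g ^ j) h ↔ (n : ℤ) ∣ j) :
    ∃ x : Multiplicative (ZMod n) → G, Function.Injective x ∧
      (∀ (j : ℤ) a, g ^ j * x a * (g ^ j)⁻¹ = x (.ofAdd (j : ZMod n) * a)) ∧
      ∀ a, IsConj h (x a) := by
  have conj_eq (i j : ℤ) : g ^ i * h * (g ^ i)⁻¹ = g ^ j * h * (g ^ j)⁻¹ ↔ (i : ZMod n) = j := by
    rw [conj_eq_conj_iff_commute, ← zpow_neg, ← zpow_add, hgh,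
      ZMod.intCast_eq_intCast_iff_dvd_sub, neg_add_eq_sub]
  have ofAdd_surj (a : Multiplicative (ZMod n)) : ∃ i : ℤ, a = .ofAdd (i : ZMod n) :=
    ⟨(a.toAdd.val : ℤ), by simp⟩
  let x (a : Multiplicative (ZMod n)) : G :=
    g ^ (a.toAdd.val : ℤ) * h * (g ^ (a.toAdd.val : ℤ))⁻¹
  have x_ofAdd (i : ℤ) : x (.ofAdd (i : ZMod n)) = g ^ i * h * (g ^ i)⁻¹ :=
    (conj_eq _ _).2 (by simp)
  refine ⟨x, fun a b hab => ?_, fun j a => ?_, fun a => isConj_iff.2 ⟨_, rfl⟩⟩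
  · obtain ⟨i, rfl⟩ := ofAdd_surj a
    obtain ⟨j, rfl⟩ := ofAdd_surj b
    rw [x_ofAdd, x_ofAdd, conj_eq] at hab
    rw [hab]
  · obtain ⟨i, rfl⟩ := ofAdd_surj a
    rw [← ofAdd_add, ← Int.cast_add, x_ofAdd, x_ofAdd, zpow_add]
    group

theorem exists_conj_eq_zpow_odd [Finite G] {c : G} [(zpowers c).Normal] (hc : Even (orderOf c))
    (u : G) : ∃ s : ℤ, u * c * u⁻¹ = c ^ s ∧ Odd s := by
  obtain ⟨s, hs⟩ := mem_zpowers_iff.1 (Normal.conj_mem inferInstance c (mem_zpowers c) u)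
  refine ⟨s, hs.symm, Int.not_even_iff_odd.1 fun ⟨t, hst⟩ => ?_⟩
  obtain ⟨m, hm⟩ := hc
  have hord : orderOf (c ^ s) = orderOf c :=
    hs ▸ (SemiconjBy.orderOf_eq u (by rw [SemiconjBy]; group)).symm
  -- `c ^ s` is a square, so its order divides `m`.
  have hdvd : orderOf (c ^ s) ∣ m := by
    have hexp : (t + t) * (m : ℤ) = (orderOf c : ℤ) * t := by rw [hm]; push_cast; ring
    rw [orderOf_dvd_iff_pow_eq_one, ← zpow_natCast, ← zpow_mul, hst, hexp, zpow_mul,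
      zpow_natCast, pow_orderOf_eq_one, one_zpow]
  rw [hord, hm] at hdvd
  have := orderOf_pos c
  have := Nat.le_of_dvd (by omega) hdvd
  omega

theorem IsPGroup.exists_zpowers_eq_top_of_closure_eq_top {α : Type*} [Group α] [Finite α]
    [IsCyclic α] [Nontrivial α] {p : ℕ} [hp : Fact p.Prime] (hα : IsPGroup p α) {S : Set α}
    (hS : closure S = ⊤) : ∃ x ∈ S, zpowers x = ⊤ := by
  let : CommGroup α := IsCyclic.commGroup
  obtain ⟨k, hk⟩ := hα.exists_card_eq
  obtain _ | k := k
  · exact absurd hk Finite.one_lt_card.ne'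
  by_contra! hS_gen
  -- Elements of `S` lie in the unique maximal subgroup, the kernel of `x ↦ x ^ p ^ k`.
  have hS_pow : S ⊆ (powMonoidHom (p ^ k) : α →* α).ker := fun x hx => by
    obtain ⟨i, hi, hxi⟩ := (Nat.dvd_prime_pow hp.out).1 (hk ▸ orderOf_dvd_natCard x)
    have hik : i ≠ k + 1 := fun h => hS_gen x hx <|
      eq_top_of_card_eq _ (by rw [Nat.card_zpowers, hxi, h, hk])
    exact orderOf_dvd_iff_pow_eq_one.1 (hxi ▸ pow_dvd_pow p (by omega))
  have hexp : Monoid.exponent α ∣ p ^ k := Monoid.exponent_dvd_of_forall_pow_eq_one fun x =>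
    (closure_le _).2 hS_pow (hS ▸ mem_top x)
  rw [IsCyclic.exponent_eq_card, hk] at hexp
  have := (Nat.pow_dvd_pow_iff_le_right hp.out.one_lt).1 hexp
  omega

theorem IsPGroup.exists_zpowers_commutatorElement_eq_commutator [Finite G] {p : ℕ}
    [Fact p.Prime] (hG : IsPGroup p G) (hcyc : IsCyclic (commutator G))
    (hne : commutator G ≠ ⊥) : ∃ g h : G, zpowers ⁅g, h⁆ = commutator G := by
  rw [commutator_eq_closure] at hcyc hne ⊢
  have : Nontrivial (closure (commutatorSet G)) := (nontrivial_iff_ne_bot _).2 hne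
  obtain ⟨⟨_, _⟩, ⟨g, h, rfl⟩, hgen⟩ :=
    (hG.to_subgroup _).exists_zpowers_eq_top_of_closure_eq_top
      (closure_preimage_eq_top (commutatorSet G))
  refine ⟨g, h, ?_⟩
  simpa [MonoidHom.map_zpowers, ← MonoidHom.range_eq_map] using
    congrArg (Subgroup.map (closure (commutatorSet G)).subtype) hgen

theorem IsPGroup.exists_conj_commutatorElement_eq_zpow [Finite G] (hG : IsPGroup 2 G)
    (hcyc : IsCyclic (commutator G)) (hne : commutator G ≠ ⊥) :
    ∃ g h : G, ∃ s : ℤ, zpowers ⁅g, h⁆ = commutator G ∧ g * ⁅g, h⁆ * g⁻¹ = ⁅g, h⁆ ^ s ∧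
      s ≡ 1 [ZMOD 4] := by
  obtain ⟨g, h, hgen⟩ := hG.exists_zpowers_commutatorElement_eq_commutator hcyc hne
  have : (zpowers ⁅g, h⁆).Normal := hgen ▸ inferInstance
  have heven : Even (orderOf ⁅g, h⁆) := by
    obtain ⟨k, hk⟩ := (hG.to_subgroup (commutator G)).exists_card_eq
    rw [← Nat.card_zpowers, hgen, hk]
    exact Nat.even_pow.2 ⟨even_two, by rintro rfl; exact hne (card_eq_one.1 hk)⟩
  have mod_four : ∀ s : ℤ, Odd s → s ≡ 1 [ZMOD 4] ∨ s ≡ 3 [ZMOD 4] := by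
    rintro _ ⟨m, rfl⟩; simp only [Int.ModEq]; omega
  obtain ⟨s, hs, hs_odd⟩ := exists_conj_eq_zpow_odd heven g
  obtain hs1 | hs3 := mod_four s hs_odd
  · exact ⟨g, h, s, hgen, hs, hs1⟩
  obtain ⟨t, ht, ht_odd⟩ := exists_conj_eq_zpow_odd heven h
  obtain ht1 | ht3 := mod_four t ht_odd
  · refine ⟨h, g, t, ?_, ?_, ht1⟩
    · rw [← commutatorElement_inv, zpowers_inv, hgen]
    · rw [← commutatorElement_inv, inv_zpow, ← ht, conj_inv]
  -- `g` and `h` both act by exponents `≡ 3 [ZMOD 4]`, so `g * h` acts by one `≡ 1 [ZMOD 4]`.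
  · have hgh : ⁅g * h, h⁆ = ⁅g, h⁆ := by group
    refine ⟨g * h, h, s * t, hgh ▸ hgen, ?_, (hs3.mul ht3).trans (by decide)⟩
    rw [hgh, zpow_mul, ← hs, conj_zpow, ← ht]
    group

theorem IsPGroup.exists_commute_zpow_iff_dvd [Finite G] (hG : IsPGroup 2 G)
    (hcyc : IsCyclic (commutator G)) (hne : commutator G ≠ ⊥) :
    ∃ g h : G, h ∉ center G ∧ ∀ j : ℤ, Commute (g ^ j) h ↔ (Nat.card (commutator G) : ℤ) ∣ j := by
  obtain ⟨g, h, s, hgen, hgc, hs⟩ := hG.exists_conj_commutatorElement_eq_zpow hcyc hne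
  obtain ⟨k, hk⟩ := (hG.to_subgroup (commutator G)).exists_card_eq
  have hc : orderOf ⁅g, h⁆ = 2 ^ k := by rw [← Nat.card_zpowers, hgen, hk]
  refine ⟨g, h, fun hh => hne ?_, fun j => ?_⟩
  · rw [← hgen, commutatorElement_eq_one_iff_mul_comm.2 (mem_center_iff.1 hh g), zpowers_one_eq_bot]
  · rw [hk]
    exact_mod_cast commute_zpow_iff_two_pow_dvd (by group) hgc hs hc j

end GroupTheory

section SqZero

variable {R V : Type*} [Ring R] [Group V]

def unitsOfSqZero (e : R) (he : e * e = 0) (f : V → R) (hf : ∀ v w, f (v * w) = f v + f w)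
    (hcomm : ∀ v, Commute e (f v)) : V →* Rˣ :=
  MonoidHom.toHomUnits
    { toFun v := 1 + e * f v
      map_one' := by simp [show f 1 = 0 by simpa using hf 1 1]
      map_mul' v w := by
        have : e * f v * (e * f w) = 0 := by
          rw [mul_assoc, ← mul_assoc (f v), ← (hcomm v).eq, mul_assoc, ← mul_assoc, he, zero_mul]
        simp only [hf, mul_add, add_mul, one_mul, mul_one, this, add_zero, add_assoc] }

@[simp]
theorem coe_unitsOfSqZero {e : R} {he : e * e = 0} {f : V → R} {hf} {hcomm} (v : V) :
    (unitsOfSqZero e he f hf hcomm v : R) = 1 + e * f v := rfl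

end SqZero

namespace MonoidAlgebra

open Subgroup

theorem commute_one_add_of {K G : Type*} [Ring K] [Group G] {z : G} (hz : z ∈ center G)
    (a : MonoidAlgebra K G) : Commute (1 + of K G z) a :=
  (Commute.one_left a).add_left (of_commute (fun g => (mem_center_iff.1 hz g).symm) a)

variable (K : Type*) {G ι : Type*} [Ring K] [CharP K 2] [Fintype ι]

/-- `v` encodes the subset `{i | v i ≠ 1}` of `ι`, and `subsetSum K x v` is the sum of the `x i`
over it. -/
noncomputable def subsetSum (x : ι → G) (v : ι → Multiplicative (ZMod 2)) : MonoidAlgebra K G :=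
  ∑ i, single (x i) (ZMod.castHom (dvd_refl 2) K (v i).toAdd)

variable {K}

theorem subsetSum_one (x : ι → G) : subsetSum K x 1 = 0 := by
  simp [subsetSum]

theorem subsetSum_mul (x : ι → G) (v w : ι → Multiplicative (ZMod 2)) :
    subsetSum K x (v * w) = subsetSum K x v + subsetSum K x w := by
  simp [subsetSum, ← Finset.sum_add_distrib, single_add]

theorem of_mul_subsetSum [Monoid G] (t : G) (x : ι → G) (v : ι → Multiplicative (ZMod 2)) :
    of K G t * subsetSum K x v = subsetSum K (t * x ·) v := by
  simp [subsetSum, Finset.mul_sum, single_mul_single]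

theorem subsetSum_mul_of [Monoid G] (t : G) (x : ι → G) (v : ι → Multiplicative (ZMod 2)) :
    subsetSum K x v * of K G t = subsetSum K (x · * t) v := by
  simp [subsetSum, Finset.sum_mul, single_mul_single]

theorem subsetSum_comp_equiv (e : ι ≃ ι) (x : ι → G) (v : ι → Multiplicative (ZMod 2)) :
    subsetSum K (x ∘ e) v = subsetSum K x (v ∘ e.symm) := by
  simpa [subsetSum] using
    e.sum_comp fun i => single (x i) (ZMod.castHom (dvd_refl 2) K (v (e.symm i)).toAdd)

theorem coeff_subsetSum_apply {x : ι → G} (hx : Function.Injective x)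
    (v : ι → Multiplicative (ZMod 2)) (i : ι) :
    (subsetSum K x v).coeff (x i) = ZMod.castHom (dvd_refl 2) K (v i).toAdd := by
  classical
  simp [subsetSum, coeff_sum, Finsupp.single_apply, hx.eq_iff]

theorem coeff_subsetSum_of_notMem {x : ι → G} {g : G} (hg : ∀ i, x i ≠ g)
    (v : ι → Multiplicative (ZMod 2)) : (subsetSum K x v).coeff g = 0 := by
  classical
  simp [subsetSum, coeff_sum, hg]

variable [Group G]

theorem one_add_of_mul_self_eq_zero {z : G} (hz2 : z ^ 2 = 1) :
    (1 + of K G z) * (1 + of K G z) = 0 := by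
  have two_mul_eq_zero (a : MonoidAlgebra K G) : a + a = 0 := by
    rw [← two_smul K a, CharTwo.two_eq_zero, zero_smul]
  calc (1 + of K G z) * (1 + of K G z) = (1 + 1) + (of K G z + of K G z) := by
        rw [mul_add, add_mul, add_mul, one_mul, mul_one, one_mul, ← map_mul, ← pow_two, hz2,
          map_one]
        abel
    _ = 0 := by rw [two_mul_eq_zero, two_mul_eq_zero, add_zero]

theorem of_mul_one_add_mul_subsetSum_mul_of_inv {z : G} (hz : z ∈ center G) (t : G) (x : ι → G)
    (v : ι → Multiplicative (ZMod 2)) :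
    of K G t * (1 + (1 + of K G z) * subsetSum K x v) * of K G t⁻¹ =
      1 + (1 + of K G z) * subsetSum K (fun i => t * x i * t⁻¹) v := by
  rw [mul_add, add_mul, mul_one, ← map_mul, mul_inv_cancel, map_one, ← mul_assoc,
    (commute_one_add_of hz _).symm.eq,
    mul_assoc, mul_assoc, ← mul_assoc (of K G t), of_mul_subsetSum, subsetSum_mul_of]

theorem eq_one_and_eq_one_of_one_add_mul_subsetSum_eq_of {z w : G} {x : ι → G}
    (hx : Function.Injective x) (hx1 : ∀ i, x i ≠ 1) (hzx1 : ∀ i, z * x i ≠ 1)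
    (hzx : ∀ i j, z * x i ≠ x j)
    {v : ι → Multiplicative (ZMod 2)} (h : 1 + (1 + of K G z) * subsetSum K x v = of K G w) :
    v = 1 ∧ w = 1 := by
  have := CharP.nontrivial_of_char_ne_one (R := K) (v := 2) (by norm_num)
  suffices hv : v = 1 by
    refine ⟨hv, of_injective (R := K) ?_⟩
    rw [← h, hv, subsetSum_one, mul_zero, add_zero, map_one]
  funext i
  by_contra hvi
  have hv : ZMod.castHom (dvd_refl 2) K (v i).toAdd = 1 := by
    have : (v i).toAdd = 1 := (by decide : ∀ a : ZMod 2, a ≠ 0 → a = 1) _ hvi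
    rw [this, map_one]
  rw [add_mul, one_mul, of_mul_subsetSum] at h
  have eq_of_coeff (p : G) (hp : (1 + (subsetSum K x v + subsetSum K (z * x ·) v)).coeff p = 1) :
      w = p := by
    classical
    rw [h, of_apply, coeff_single, Finsupp.single_apply] at hp
    split_ifs at hp with hwp
    exacts [hwp, absurd hp zero_ne_one]
  have hw₁ : w = x i := eq_of_coeff _ <| by
    simp [one_def, coeff_add, coeff_subsetSum_apply hx, coeff_subsetSum_of_notMem (hzx · i),
      (hx1 i).symm, hv]
  have hw₂ : w = z * x i := eq_of_coeff _ <| by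
    simp [one_def, coeff_add, coeff_subsetSum_of_notMem (fun j => (hzx i j).symm), (hzx1 i).symm,
      coeff_subsetSum_apply (x := (z * x ·)) (fun _ _ hab => hx (mul_left_cancel hab)), hv]
  exact hzx i i (hw₂.symm.trans hw₁)

end MonoidAlgebra

theorem exists_subgroup_quotient_mulEquiv_of_ker_le {E U W : Type*} [Group E] [Group U]
    [Group W] (Φ : E →* U) (π : E →* W) (hπ : Function.Surjective π) (hker : Φ.ker ≤ π.ker) :
    ∃ H : Subgroup U, ∃ N : Subgroup H, ∃ hN : N.Normal,
      letI := hN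
      Nonempty (H ⧸ N ≃* W) := by
  let ψ : Φ.range →* W :=
    (QuotientGroup.lift Φ.ker π hker).comp (QuotientGroup.quotientKerEquivRange Φ).symm.toMonoidHom
  have hψ : Function.Surjective ψ := fun w => by
    obtain ⟨e, rfl⟩ := hπ w
    exact ⟨QuotientGroup.quotientKerEquivRange Φ e, by simp [ψ]⟩
  exact ⟨Φ.range, ψ.ker, inferInstance, ⟨QuotientGroup.quotientKerEquivOfSurjective ψ hψ⟩⟩

open Subgroup MonoidAlgebra in
theorem exists_subgroup_quotient_mulEquiv_wreathC2 {K G A B : Type*} [Ring K] [CharP K 2]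
    [Group G] [Group A] [Fintype A] [Group B] {z : G} (hz : z ∈ center G) (hz2 : z ^ 2 = 1)
    (ρ : B →* A) (hρ : Function.Surjective ρ) (σ : B →* G) {x : A → G}
    (hx : Function.Injective x) (hσ : ∀ b a, σ b * x a * (σ b)⁻¹ = x (ρ b * a))
    (hx1 : ∀ a, x a ≠ 1) (hzx1 : ∀ a, z * x a ≠ 1) (hzx : ∀ a a', z * x a ≠ x a') :
    ∃ H : Subgroup (MonoidAlgebra K G)ˣ, ∃ N : Subgroup H, ∃ hN : N.Normal,
      letI := hN
      Nonempty (H ⧸ N ≃* WreathC2 A) := by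
  let base : (A → Multiplicative (ZMod 2)) →* (MonoidAlgebra K G)ˣ :=
    unitsOfSqZero _ (one_add_of_mul_self_eq_zero hz2) (subsetSum K x) (subsetSum_mul x)
      fun _ => commute_one_add_of hz _
  let top : B →* (MonoidAlgebra K G)ˣ := (of K G).toHomUnits.comp σ
  have compat (b : B) : base.comp ((wreathMap A).comp ρ b).toMonoidHom =
      (MulAut.conj (top b)).toMonoidHom.comp base := by
    ext v : 2
    simp only [MonoidHom.comp_apply, MulEquiv.coe_toMonoidHom, MulAut.conj_apply, Units.val_mul,
      coe_unitsOfSqZero, top, ← map_inv, MonoidHom.coe_toHomUnits, base]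
    rw [map_inv σ, of_mul_one_add_mul_subsetSum_mul_of_inv hz]
    simp only [hσ]
    exact congrArg (1 + _ * ·) (subsetSum_comp_equiv (Equiv.mulLeft (ρ b)) x v).symm
  let Φ := SemidirectProduct.lift base top compat
  let π : (A → Multiplicative (ZMod 2)) ⋊[(wreathMap A).comp ρ] B →* WreathC2 A :=
    SemidirectProduct.map (MonoidHom.id _) ρ fun _ => rfl
  refine exists_subgroup_quotient_mulEquiv_of_ker_le Φ π ?_ ?_
  · intro w
    obtain ⟨b, hb⟩ := hρ w.right
    exact ⟨⟨w.left, b⟩, SemidirectProduct.ext rfl hb⟩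
  · intro e he
    have hunit : base e.left = top e.right⁻¹ := by
      rw [map_inv]; exact eq_inv_of_mul_eq_one_left he
    obtain ⟨hleft, hσ1⟩ := eq_one_and_eq_one_of_one_add_mul_subsetSum_eq_of hx hx1 hzx1 hzx
      (congrArg Units.val hunit)
    have hρ1 : ρ e.right = 1 := by
      have := hσ e.right⁻¹ 1
      rw [hσ1, one_mul, inv_one, mul_one] at this
      simpa using (hx this).symm
    exact MonoidHom.mem_ker.2 <| SemidirectProduct.ext hleft hρ1

theorem wreath_product_involved_in_units_general
    (K G : Type*) [Field K] [CharP K 2] [Group G] [Finite G]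
    (hG : IsPGroup 2 G) (hna : ¬ ∀ x y : G, x * y = y * x)
    (hcyc : IsCyclic (commutator G))
    (z : G) (hzc : z ∈ Subgroup.center G) (hzG' : z ∉ commutator G)
    (hz2 : z ^ 2 = 1) :
    ∃ H : Subgroup (MonoidAlgebra K G)ˣ, ∃ N : Subgroup H, ∃ hN : N.Normal,
      letI := hN
      Nonempty (H ⧸ N ≃*
        WreathC2 (Multiplicative (ZMod (Nat.card (commutator G))))) := by
  have hne : commutator G ≠ ⊥ := fun hbot => hna fun x y =>
    commutatorElement_eq_one_iff_mul_comm.1 <| Subgroup.mem_bot.1 <|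
      hbot ▸ Subgroup.commutator_mem_commutator (Subgroup.mem_top x) (Subgroup.mem_top y)
  obtain ⟨g, h, hh, hcomm⟩ := hG.exists_commute_zpow_iff_dvd hcyc hne
  have : NeZero (Nat.card (commutator G)) := ⟨Nat.card_pos.ne'⟩
  obtain ⟨x, hx, hshift, hconj⟩ := exists_injective_zmod_conj_family hcomm
  have hx_center (a) : x a ∉ Subgroup.center G := fun ha =>
    hh ((hconj a).eq_of_right_mem_center ha ▸ ha)
  refine exists_subgroup_quotient_mulEquiv_wreathC2 hzc hz2 (Int.castAddHom _).toMultiplicative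
    ZMod.intCast_surjective (zpowersHom G g) hx (fun b => hshift b.toAdd)
    (fun a ha => hx_center a (ha ▸ Subgroup.one_mem _))
    (fun a ha => hx_center a (eq_inv_of_mul_eq_one_right ha ▸ Subgroup.inv_mem _ hzc))
    (fun a a' ha => hzG' ?_)
  rw [eq_mul_inv_of_mul_eq ha]
  exact ((hconj a).symm.trans (hconj a')).mul_inv_mem_commutator

/-- For a finite non-abelian 2-group `G` with cyclic derived subgroup and a
central involution `z ∉ G'`, the wreath product `C₂ ≀ C_{|G'|}` is involved in
the unit group of `K[G]` (char `K` = 2). -/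
theorem wreath_product_involved_in_units
    (K G : Type*) [Field K] [CharP K 2] [Group G] [Finite G]
    (hG : IsPGroup 2 G) (hna : ¬ ∀ x y : G, x * y = y * x)
    (hcyc : IsCyclic (commutator G))
    (z : G) (hzc : z ∈ Subgroup.center G) (hzG' : z ∉ commutator G)
    (hz2 : z ^ 2 = 1) (hz1 : z ≠ 1) :
    ∃ H : Subgroup (MonoidAlgebra K G)ˣ, ∃ N : Subgroup H, ∃ hN : N.Normal,
      letI := hN
      Nonempty (H ⧸ N ≃*
        WreathC2 (Multiplicative (ZMod (Nat.card (commutator G))))) :=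
  wreath_product_involved_in_units_general K G hG hna hcyc z hzc hzG' hz2
end
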